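/- Let (X, μ) be a measure space with μ a finite measure, let c : X → ℝ be measurable, and let g, v : X → ℝ be integrable functions such that g(x) > v(x) whenever c(x) < 0, g(x) < v(x) whenever c(x) > 0, and g(x) = v(x) whenever c(x) = 0. Define O(c') = ∫ (if c(x) < c' then g(x) else v(x)) dμ(x). Assume further that for every c' < 0 the set {x : c' ≤ c(x) < 0} has positive μ-measure and for every c' > 0 the set {x : 0 < c(x) < c'} has positive μ-measure. Then c' = 0 is the unique global maximizer of O: O(c') < O(0) for every c' ≠ 0. -/

import Mathlib

/-!
Moving the threshold from `s` to `t ≥ s` switches exactly the paths with `s ≤ c x < t` from the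
continuation value `v` to the exercise payoff `g`, so `O t - O s = ∫_{s ≤ c < t} (g - v) dμ`.
For `t < 0`, `O 0 - O t` integrates `g - v > 0` over `t ≤ c < 0`; for `t > 0` it integrates
`v - g` over `0 ≤ c < t`, which is `≥ 0` there and `> 0` off the boundary `c = 0`. Either way the
integrand is positive on a set of positive mass.
-/

open MeasureTheory Set

theorem ite_lt_eq_ite_lt_add_indicator {X : Type*} {c g v : X → ℝ} {s t : ℝ} (hst : s ≤ t)
    (x : X) :
    (if c x < t then g x else v x)
      = (if c x < s then g x else v x) + (c ⁻¹' Ico s t).indicator (g - v) x := by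
  rcases lt_or_ge (c x) s with hs | hs
  · rw [if_pos hs, if_pos (hs.trans_le hst), indicator_of_notMem fun h => h.1.not_gt hs, add_zero]
  · rw [if_neg hs.not_gt]
    by_cases ht : c x < t
    · rw [if_pos ht, indicator_of_mem (show x ∈ c ⁻¹' Ico s t from ⟨hs, ht⟩), Pi.sub_apply,
        add_sub_cancel]
    · rw [if_neg ht, indicator_of_notMem fun h => ht h.2, add_zero]

section ThresholdPayoff

variable {X : Type*} [MeasurableSpace X] {μ : Measure X} {c g v : X → ℝ}

theorem integrable_ite_lt (hc : Measurable c) (hg : Integrable g μ) (hv : Integrable v μ)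
    (t : ℝ) : Integrable (fun x => if c x < t then g x else v x) μ := by
  classical
  exact (Integrable.piecewise (s := {x | c x < t}) (measurableSet_lt hc measurable_const)
    hg.integrableOn hv.integrableOn).congr (ae_of_all _ fun x => by simp [piecewise])

theorem integral_ite_lt_sub_integral_ite_lt (hc : Measurable c) (hg : Integrable g μ)
    (hv : Integrable v μ) {s t : ℝ} (hst : s ≤ t) :
    ∫ x, (if c x < t then g x else v x) ∂μ - ∫ x, (if c x < s then g x else v x) ∂μ
      = ∫ x in c ⁻¹' Ico s t, (g x - v x) ∂μ := by
  have hstrip : MeasurableSet (c ⁻¹' Ico s t) := hc measurableSet_Ico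
  rw [funext (ite_lt_eq_ite_lt_add_indicator hst),
    integral_add (integrable_ite_lt hc hg hv s) ((hg.sub hv).indicator hstrip),
    integral_indicator hstrip, add_sub_cancel_left, Pi.sub_def]

end ThresholdPayoff

theorem setIntegral_pos_of_pos_on_subset {X : Type*} [MeasurableSpace X] {μ : Measure X}
    {f : X → ℝ} {s t : Set X} (hs : MeasurableSet s) (hf : IntegrableOn f s μ)
    (hnonneg : ∀ x ∈ s, 0 ≤ f x) (hts : t ⊆ s) (hpos : ∀ x ∈ t, 0 < f x) (ht : 0 < μ t) :
    0 < ∫ x in s, f x ∂μ := by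
  rw [setIntegral_pos_iff_support_of_nonneg_ae (ae_restrict_of_forall_mem hs hnonneg) hf]
  exact ht.trans_le (measure_mono fun x hx => ⟨(hpos x hx).ne', hts hx⟩)

theorem payoff_functional_unique_max_at_boundary_general
    {X : Type*} [MeasurableSpace X] (μ : Measure X)
    (c g v : X → ℝ) (hc : Measurable c)
    (hg : Integrable g μ) (hv : Integrable v μ)
    (hlt : ∀ x, c x < 0 → g x > v x)
    (hgt : ∀ x, 0 < c x → g x < v x)
    (heq : ∀ x, c x = 0 → g x = v x)
    (hmass_neg : ∀ c' : ℝ, c' < 0 → 0 < μ {x | c' ≤ c x ∧ c x < 0})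
    (hmass_pos : ∀ c' : ℝ, 0 < c' → 0 < μ {x | 0 < c x ∧ c x < c'}) :
    ∀ c' : ℝ, c' ≠ 0 →
      (∫ x, (if c x < c' then g x else v x) ∂μ)
        < ∫ x, (if c x < 0 then g x else v x) ∂μ := by
  intro c' hc'
  rcases hc'.lt_or_gt with hneg | hpos
  · have hgain := integral_ite_lt_sub_integral_ite_lt (μ := μ) hc hg hv hneg.le
    have hstrip : 0 < ∫ x in c ⁻¹' Ico c' 0, (g x - v x) ∂μ :=
      setIntegral_pos_of_pos_on_subset (hc measurableSet_Ico) (hg.sub hv).integrableOn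
        (fun x hx => (sub_pos.2 (hlt x hx.2)).le) subset_rfl
        (fun x hx => sub_pos.2 (hlt x hx.2)) (hmass_neg c' hneg)
    linarith
  · have hloss := integral_ite_lt_sub_integral_ite_lt (μ := μ) hc hg hv hpos.le
    have hstrip : 0 < ∫ x in c ⁻¹' Ico 0 c', (v x - g x) ∂μ :=
      setIntegral_pos_of_pos_on_subset (hc measurableSet_Ico) (hv.sub hg).integrableOn
        (fun x hx => sub_nonneg.2 <| hx.1.eq_or_lt.elim (fun h => (heq x h.symm).le)
          fun h => (hgt x h).le)
        (fun x hx => ⟨hx.1.le, hx.2⟩) (fun x hx => sub_pos.2 (hgt x hx.1)) (hmass_pos c' hpos)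
    have hswap : ∫ x in c ⁻¹' Ico 0 c', (g x - v x) ∂μ
        = -∫ x in c ⁻¹' Ico 0 c', (v x - g x) ∂μ := by
      rw [← integral_neg]; simp
    linarith

/-- Proposition P1: under positive-mass conditions near the boundary, `c' = 0` is the unique
global maximizer of the payoff functional `O(c') = ∫ (if c(x) < c' then g(x) else v(x)) dμ`. -/
theorem payoff_functional_unique_max_at_boundary
    {X : Type*} [MeasurableSpace X] (μ : Measure X) [IsFiniteMeasure μ]
    (c g v : X → ℝ) (hc : Measurable c)
    (hg : Integrable g μ) (hv : Integrable v μ)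
    (hlt : ∀ x, c x < 0 → g x > v x)
    (hgt : ∀ x, 0 < c x → g x < v x)
    (heq : ∀ x, c x = 0 → g x = v x)
    (hmass_neg : ∀ c' : ℝ, c' < 0 → 0 < μ {x | c' ≤ c x ∧ c x < 0})
    (hmass_pos : ∀ c' : ℝ, 0 < c' → 0 < μ {x | 0 < c x ∧ c x < c'}) :
    ∀ c' : ℝ, c' ≠ 0 →
      (∫ x, (if c x < c' then g x else v x) ∂μ)
        < ∫ x, (if c x < 0 then g x else v x) ∂μ :=
  payoff_functional_unique_max_at_boundary_general μ c g v hc hg hv hlt hgt heq hmass_neg hmass_pos
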